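/- arXiv:1107.1130 — 5 statements merged into one kernel-verified Lean document; each statement's English description precedes it below -/
import Mathlib

section
/- Dismal addition and dismal multiplication in base b are commutative and associative, and dismal multiplication distributes over dismal addition. -/
/-! The base-`b` digit map `n ↦ digit b n` is injective, and it turns dismal addition into the
pointwise maximum and dismal multiplication into the max-min convolution of digit sequences.
All six laws therefore reduce to the corresponding laws for functions `ℕ → α` with values in a
distributive lattice, where the convolution is associative and distributes over `⊔` because
`⊓` distributes over finite suprema. -/

/-- The `i`-th base-`b` digit of `n`. -/
def digit (b n i : ℕ) : ℕ := n / b ^ i % b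

/-- Dismal addition in base `b`: digitwise maximum of base-`b` digits. -/
def dadd (b m n : ℕ) : ℕ :=
  ∑ i ∈ Finset.range (m + n + 1), max (digit b m i) (digit b n i) * b ^ i

/-- Dismal multiplication in base `b`: digit convolution with `min` as digit
product and `max` as digit sum (no carries). -/
def dmul (b m n : ℕ) : ℕ :=
  ∑ k ∈ Finset.range (m + n + 1),
    ((Finset.range (k + 1)).sup fun i => min (digit b m i) (digit b n (k - i))) * b ^ k

/-- The number of base-`b` digits of `n`. -/
def dlen (b n : ℕ) : ℕ := (Nat.digits b n).length

open Finset

section SupInfConv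

variable {α : Type*} [DistribLattice α] [OrderBot α]

def supInfConv (f g : ℕ → α) (k : ℕ) : α :=
  (range (k + 1)).sup fun i => f i ⊓ g (k - i)

theorem supInfConv_comm (f g : ℕ → α) : supInfConv f g = supInfConv g f := by
  have key : ∀ (f g : ℕ → α) (k : ℕ), supInfConv f g k ≤ supInfConv g f k :=
    fun f g k => Finset.sup_le fun i hi => by
      have hi : i < k + 1 := mem_range.1 hi
      refine le_sup_of_le (mem_range.2 (show k - i < k + 1 by omega)) ?_
      rw [Nat.sub_sub_self (by omega), inf_comm]
  exact funext fun k => le_antisymm (key f g k) (key g f k)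

/-- Both sides are the supremum of `f i ⊓ g j ⊓ h r` over all `i + j + r = l`. -/
theorem supInfConv_assoc (f g h : ℕ → α) :
    supInfConv (supInfConv f g) h = supInfConv f (supInfConv g h) := by
  funext l
  simp only [supInfConv, sup_inf_distrib_right, sup_inf_distrib_left, ← inf_assoc]
  apply le_antisymm
  · refine Finset.sup_le fun k hk => Finset.sup_le fun i hi => ?_
    have hk : k < l + 1 := mem_range.1 hk
    have hi : i < k + 1 := mem_range.1 hi
    refine le_sup_of_le (mem_range.2 (show i < l + 1 by omega)) <|
      le_sup_of_le (mem_range.2 (show k - i < l - i + 1 by omega)) ?_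
    rw [show l - i - (k - i) = l - k by omega]
  · refine Finset.sup_le fun i hi => Finset.sup_le fun j hj => ?_
    have hi : i < l + 1 := mem_range.1 hi
    have hj : j < l - i + 1 := mem_range.1 hj
    refine le_sup_of_le (mem_range.2 (show i + j < l + 1 by omega)) <|
      le_sup_of_le (mem_range.2 (show i < i + j + 1 by omega)) ?_
    rw [Nat.add_sub_cancel_left, Nat.sub_sub]

theorem supInfConv_sup (f g h : ℕ → α) :
    supInfConv f (g ⊔ h) = supInfConv f g ⊔ supInfConv f h := by
  funext k
  simp only [supInfConv, Pi.sup_apply, inf_sup_left]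
  exact Finset.sup_sup

theorem sup_supInfConv (f g h : ℕ → α) :
    supInfConv (f ⊔ g) h = supInfConv f h ⊔ supInfConv g h := by
  rw [supInfConv_comm, supInfConv_sup, supInfConv_comm h, supInfConv_comm h]

end SupInfConv

section Digits

variable {b : ℕ}

theorem digit_zero (n : ℕ) : digit b n 0 = n % b := by
  simp [digit]

theorem digit_succ (n i : ℕ) : digit b n (i + 1) = digit b (n / b) i := by
  rw [digit, digit, Nat.div_div_eq_div_mul, ← pow_succ']

theorem digit_lt (hb : 0 < b) (n i : ℕ) : digit b n i < b :=
  Nat.mod_lt _ hb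

theorem digit_eq_zero_of_lt_pow {n i : ℕ} (h : n < b ^ i) : digit b n i = 0 := by
  rw [digit, Nat.div_eq_of_lt h, Nat.zero_mod]

theorem digit_eq_zero_of_lt (hb : 2 ≤ b) {n i : ℕ} (h : n < i) : digit b n i = 0 :=
  digit_eq_zero_of_lt_pow (h.trans (Nat.lt_pow_self hb))

theorem mod_pow_eq_sum_digit (n N : ℕ) :
    n % b ^ N = ∑ i ∈ range N, digit b n i * b ^ i := by
  induction N with
  | zero => simp [Nat.mod_one]
  | succ N ih => rw [Nat.mod_pow_succ, ih, sum_range_succ, digit, mul_comm (b ^ N)]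

theorem digit_injective (hb : 2 ≤ b) : Function.Injective (digit b) := by
  intro m n h
  have hN : ∀ x ≤ m + n, x % b ^ (m + n) = x := fun x hx =>
    Nat.mod_eq_of_lt ((Nat.lt_succ_of_le hx).trans_le (Nat.lt_pow_self hb))
  calc m = m % b ^ (m + n) := (hN m le_self_add).symm
    _ = n % b ^ (m + n) := by rw [mod_pow_eq_sum_digit, mod_pow_eq_sum_digit, h]
    _ = n := hN n le_add_self

theorem digit_sum_mul_pow {f : ℕ → ℕ} (hf : ∀ i, f i < b) (N j : ℕ) :
    digit b (∑ i ∈ range N, f i * b ^ i) j = if j < N then f j else 0 := by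
  induction N generalizing f j with
  | zero => simp [digit]
  | succ N ih =>
    have hb : 0 < b := (hf 0).pos
    have hsplit : ∑ i ∈ range (N + 1), f i * b ^ i
        = f 0 + b * ∑ i ∈ range N, f (i + 1) * b ^ i := by
      rw [sum_range_succ', add_comm, mul_sum]
      simp only [pow_succ', pow_zero, mul_one, mul_left_comm b]
    cases j with
    | zero => rw [digit_zero, hsplit, Nat.add_mul_mod_self_left, Nat.mod_eq_of_lt (hf 0)]; simp
    | succ j =>
      rw [digit_succ, hsplit, Nat.add_mul_div_left _ _ hb, Nat.div_eq_of_lt (hf 0), zero_add,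
        ih fun i => hf (i + 1)]
      simp only [Nat.add_lt_add_iff_right]

theorem digit_dadd (hb : 2 ≤ b) (m n : ℕ) :
    digit b (dadd b m n) = digit b m ⊔ digit b n := by
  funext i
  have hlt : ∀ j, max (digit b m j) (digit b n j) < b := fun j =>
    max_lt (digit_lt (by omega) m j) (digit_lt (by omega) n j)
  rw [dadd, digit_sum_mul_pow hlt]
  split_ifs with hi
  · rfl
  · simp [digit_eq_zero_of_lt hb (show m < i by omega),
      digit_eq_zero_of_lt hb (show n < i by omega)]

theorem digit_dmul (hb : 2 ≤ b) (m n : ℕ) :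
    digit b (dmul b m n) = supInfConv (digit b m) (digit b n) := by
  funext k
  have hlt : ∀ j, supInfConv (digit b m) (digit b n) j < b := fun j =>
    (Finset.sup_lt_iff (by simp; omega)).2 fun i _ =>
      (min_le_left _ _).trans_lt (digit_lt (by omega) m i)
  have hdmul : dmul b m n
      = ∑ k ∈ range (m + n + 1), supInfConv (digit b m) (digit b n) k * b ^ k := rfl
  rw [hdmul, digit_sum_mul_pow hlt]
  split_ifs with hk
  · rfl
  · -- `i + (k - i) = k > m + n`, so one of the two digits lies beyond its number.
    refine (eq_bot_iff.2 <| Finset.sup_le fun i hi => ?_).symm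
    have hi : i < k + 1 := mem_range.1 hi
    rcases lt_or_ge m i with hmi | hmi
    · simp [digit_eq_zero_of_lt hb hmi]
    · simp [digit_eq_zero_of_lt hb (show n < k - i by omega)]

end Digits

/-- dismal addition and multiplication are commutative and
associative, and dismal multiplication distributes over dismal addition. -/
theorem dismal_comm_assoc_distrib (b : ℕ) (hb : 2 ≤ b) :
    (∀ m n : ℕ, dadd b m n = dadd b n m) ∧
    (∀ m n p : ℕ, dadd b (dadd b m n) p = dadd b m (dadd b n p)) ∧
    (∀ m n : ℕ, dmul b m n = dmul b n m) ∧
    (∀ m n p : ℕ, dmul b (dmul b m n) p = dmul b m (dmul b n p)) ∧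
    (∀ m n p : ℕ, dmul b m (dadd b n p) = dadd b (dmul b m n) (dmul b m p)) ∧
    (∀ m n p : ℕ, dmul b (dadd b m n) p = dadd b (dmul b m p) (dmul b n p)) := by
  have h := digit_injective hb
  refine ⟨fun m n => h ?_, fun m n p => h ?_, fun m n => h ?_, fun m n p => h ?_,
    fun m n p => h ?_, fun m n p => h ?_⟩ <;> simp only [digit_dadd hb, digit_dmul hb]
  · exact sup_comm _ _
  · exact sup_assoc _ _ _
  · exact supInfConv_comm _ _
  · exact supInfConv_assoc _ _ _
  · exact supInfConv_sup _ _ _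
  · exact sup_supInfConv _ _ _
end

section
/- If p is a dismal prime in base b, then at least one base-b digit of p equals b−1. -/
/-- A base-`b` dismal prime: a number other than `b - 1` whose only dismal
factorizations are `(b - 1) ⊠ p`. -/
def DPrime (b p : ℕ) : Prop :=
  p ≠ b - 1 ∧ ∀ m n : ℕ, dmul b m n = p →
    (m = b - 1 ∧ n = p) ∨ (m = p ∧ n = b - 1)

/-! If every digit of `p` is at most `c < b - 1`, then the one-digit number `c` acts on `p` as the
identity, `c ⊠ p = p`, which is a factorization of `p` other than the trivial ones. -/

lemma sum_range_digit_mul_pow (b m n : ℕ) :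
    ∑ k ∈ Finset.range n, digit b m k * b ^ k = m % b ^ n := by
  induction n with
  | zero => simp [Nat.mod_one]
  | succ n ih => rw [Finset.sum_range_succ, ih, Nat.mod_pow_succ, digit, Nat.mul_comm]

lemma digit_of_lt {b c : ℕ} (hc : c < b) (i : ℕ) :
    digit b c i = if i = 0 then c else 0 := by
  cases i with
  | zero => simp [digit, Nat.mod_eq_of_lt hc]
  | succ i =>
    have hc' : c < b ^ (i + 1) := hc.trans_le (Nat.le_self_pow (by omega) b)
    simp [digit, Nat.div_eq_of_lt hc']

lemma sup_min_digit_of_lt {b c p : ℕ} (hc : c < b) (hp : ∀ k, digit b p k ≤ c) (k : ℕ) :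
    ((Finset.range (k + 1)).sup fun i => min (digit b c i) (digit b p (k - i))) = digit b p k := by
  apply le_antisymm
  · refine Finset.sup_le fun i _ => ?_
    rcases Nat.eq_zero_or_pos i with rfl | hi
    · simp [digit_of_lt hc]
    · simp [digit_of_lt hc, hi.ne']
  · refine Finset.le_sup_of_le (b := 0) (by simp) ?_
    simp [digit_of_lt hc, hp k]

lemma dmul_of_digit_le {b c p : ℕ} (hb : 1 < b) (hc : c < b) (hp : ∀ k, digit b p k ≤ c) :
    dmul b c p = p := by
  have hlt : p < b ^ (c + p + 1) :=
    Nat.lt_pow_self hb |>.trans_le (Nat.pow_le_pow_right (by omega) (by omega))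
  rw [dmul, Finset.sum_congr rfl fun k _ => by rw [sup_min_digit_of_lt hc hp k],
    sum_range_digit_mul_pow, Nat.mod_eq_of_lt hlt]

/-- every dismal prime has a digit equal to `b - 1`. -/
theorem dismal_prime_has_max_digit (b : ℕ) (hb : 2 ≤ b) (p : ℕ)
    (hp : DPrime b p) : ∃ i, digit b p i = b - 1 := by
  by_contra! h
  have hdigit : ∀ k, digit b p k ≤ b - 2 := fun k => by
    have := Nat.mod_lt (p / b ^ k) (by omega : 0 < b)
    have := h k
    unfold digit at *
    omega
  rcases hp.2 (b - 2) p (dmul_of_digit_le hb (by omega) hdigit) with ⟨hc, -⟩ | ⟨-, hp1⟩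
  · omega
  · exact hp.1 hp1
end

section
/- Every base-b number having at least one digit equal to b−1 is a (possibly empty) dismal product of dismal primes. -/
namespace Dismal

open Finset

variable {b : ℕ}

lemma digit_lt (hb : 0 < b) (n i : ℕ) : digit b n i < b :=
  Nat.mod_lt _ hb

lemma digit_zero (n : ℕ) : digit b n 0 = n % b := by
  simp [digit]

lemma digit_succ (n i : ℕ) : digit b n (i + 1) = digit b (n / b) i := by
  rw [digit, digit, Nat.div_div_eq_div_mul, pow_succ, mul_comm]

lemma digit_eq_zero_of_lt {n i : ℕ} (h : n < b ^ i) : digit b n i = 0 := by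
  rw [digit, Nat.div_eq_of_lt h, Nat.zero_mod]

lemma pow_le_of_digit_ne_zero {n i : ℕ} (h : digit b n i ≠ 0) : b ^ i ≤ n := by
  by_contra hlt
  exact h (digit_eq_zero_of_lt (not_le.1 hlt))

lemma digit_log_ne_zero (hb : 1 < b) {n : ℕ} (hn : n ≠ 0) : digit b n (Nat.log b n) ≠ 0 := by
  have hpos : 0 < b ^ Nat.log b n := by positivity
  have hlo : 1 ≤ n / b ^ Nat.log b n := (Nat.one_le_div_iff hpos).2 (Nat.pow_log_le_self b hn)
  have hhi : n / b ^ Nat.log b n < b :=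
    Nat.div_lt_of_lt_mul (by rw [← pow_succ]; exact Nat.lt_pow_succ_log_self hb n)
  rw [digit, Nat.mod_eq_of_lt hhi]
  omega

lemma digit_base_sub_one (hb : 1 < b) :
    digit b (b - 1) = fun j => if j = 0 then b - 1 else 0 := by
  have hlt : b - 1 < b := by omega
  funext j
  rcases j with _ | j
  · simp [digit_zero, Nat.mod_eq_of_lt hlt]
  · exact digit_eq_zero_of_lt (hlt.trans_le (Nat.le_self_pow (Nat.succ_ne_zero j) b))

lemma digit_add_mul_zero {a : ℕ} (ha : a < b) (s : ℕ) : digit b (a + b * s) 0 = a := by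
  rw [digit_zero, Nat.add_mul_mod_self_left, Nat.mod_eq_of_lt ha]

lemma digit_add_mul_succ {a : ℕ} (ha : a < b) (s t : ℕ) :
    digit b (a + b * s) (t + 1) = digit b s t := by
  rw [digit_succ, Nat.add_mul_div_left _ _ (by omega), Nat.div_eq_of_lt ha, zero_add]

lemma sum_range_succ_mul_pow (f : ℕ → ℕ) (N : ℕ) :
    ∑ i ∈ range (N + 1), f i * b ^ i = f 0 + b * ∑ i ∈ range N, f (i + 1) * b ^ i := by
  rw [sum_range_succ', mul_sum, add_comm]
  simp only [pow_succ, pow_zero, mul_one]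
  congr 1
  exact sum_congr rfl fun i _ => by ring

lemma digit_sum_mul_pow {f : ℕ → ℕ} (hf : ∀ i, f i < b) (N t : ℕ) :
    digit b (∑ i ∈ range N, f i * b ^ i) t = if t < N then f t else 0 := by
  induction t generalizing N f with
  | zero =>
    rcases N with _ | N
    · simp [digit]
    · rw [sum_range_succ_mul_pow, digit_add_mul_zero (hf 0), if_pos N.succ_pos]
  | succ t ih =>
    rcases N with _ | N
    · simp [digit]
    · rw [sum_range_succ_mul_pow, digit_add_mul_succ (hf 0), ih (fun i => hf (i + 1))]
      simp only [Nat.add_lt_add_iff_right]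

lemma digit_eq_zero_of_lt_index (hb : 1 < b) {n i : ℕ} (h : n < i) : digit b n i = 0 :=
  digit_eq_zero_of_lt (h.trans (Nat.lt_pow_self hb))

lemma digit_ext (hb : 1 < b) {x y : ℕ} (h : ∀ i, digit b x i = digit b y i) : x = y := by
  have hmod : ∀ N, x % b ^ N = y % b ^ N := by
    intro N
    induction N with
    | zero => simp [Nat.mod_one]
    | succ N ih =>
      have hN : x / b ^ N % b = y / b ^ N % b := h N
      rw [Nat.mod_pow_succ, Nat.mod_pow_succ, ih, hN]
  have hpow : ∀ z, z ≤ x + y → z < b ^ (x + y) := fun z hz =>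
    (Nat.lt_pow_self hb).trans_le (Nat.pow_le_pow_right (by omega) hz)
  calc x = x % b ^ (x + y) := (Nat.mod_eq_of_lt (hpow x (by omega))).symm
    _ = y % b ^ (x + y) := hmod _
    _ = y := Nat.mod_eq_of_lt (hpow y (by omega))

section SupConv

def supConv (f g : ℕ → ℕ) (t : ℕ) : ℕ :=
  (range (t + 1)).sup fun i => min (f i) (g (t - i))

variable (f g h : ℕ → ℕ)

lemma supConv_le_iff {t a : ℕ} :
    supConv f g t ≤ a ↔ ∀ i j, i + j = t → min (f i) (g j) ≤ a := by
  simp only [supConv, Finset.sup_le_iff, mem_range]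
  constructor
  · rintro hle i j rfl
    simpa using hle i (by omega)
  · intro hle i hi
    exact hle i (t - i) (by omega)

lemma min_le_supConv (i j : ℕ) : min (f i) (g j) ≤ supConv f g (i + j) :=
  (supConv_le_iff f g).1 le_rfl i j rfl

lemma exists_supConv_eq_min (t : ℕ) : ∃ i j, i + j = t ∧ supConv f g t = min (f i) (g j) := by
  obtain ⟨i, hi, he⟩ := exists_mem_eq_sup (range (t + 1)) nonempty_range_add_one
    fun i => min (f i) (g (t - i))
  exact ⟨i, t - i, by simp at hi; omega, he⟩

lemma supConv_comm : supConv f g = supConv g f := by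
  funext t
  refine le_antisymm ?_ ?_ <;>
  · refine (supConv_le_iff _ _).2 fun i j hij => ?_
    rw [min_comm, ← hij, add_comm]
    exact min_le_supConv _ _ j i

lemma supConv_supConv_le (t : ℕ) : supConv (supConv f g) h t ≤ supConv f (supConv g h) t := by
  refine (supConv_le_iff _ _).2 fun i j hij => ?_
  obtain ⟨p, q, rfl, hpq⟩ := exists_supConv_eq_min f g i
  calc min (supConv f g (p + q)) (h j) = min (f p) (min (g q) (h j)) := by rw [hpq, min_assoc]
    _ ≤ min (f p) (supConv g h (q + j)) := min_le_min_left _ (min_le_supConv g h q j)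
    _ ≤ supConv f (supConv g h) (p + (q + j)) := min_le_supConv _ _ p (q + j)
    _ = supConv f (supConv g h) t := by rw [← hij, add_assoc]

lemma supConv_assoc : supConv (supConv f g) h = supConv f (supConv g h) := by
  funext t
  refine le_antisymm (supConv_supConv_le f g h t) ?_
  calc supConv f (supConv g h) t = supConv (supConv h g) f t := by
        rw [supConv_comm g h, supConv_comm f]
    _ ≤ supConv h (supConv g f) t := supConv_supConv_le h g f t
    _ = supConv (supConv f g) h t := by rw [supConv_comm g f, supConv_comm h]

lemma supConv_ite_zero (c t : ℕ) :
    supConv f (fun j => if j = 0 then c else 0) t = min (f t) c := by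
  refine le_antisymm ((supConv_le_iff _ _).2 fun i j hij => ?_) ?_
  · rcases eq_or_ne j 0 with rfl | hj
    · simp [← hij]
    · simp [hj]
  · simpa using min_le_supConv f (fun j => if j = 0 then c else 0) t 0

end SupConv

lemma digit_dmul (hb : 1 < b) (m n t : ℕ) :
    digit b (dmul b m n) t = supConv (digit b m) (digit b n) t := by
  have hlt : ∀ k, supConv (digit b m) (digit b n) k < b := fun k =>
    Nat.lt_of_le_pred (by omega) <| (supConv_le_iff _ _).2 fun i _ _ =>
      (min_le_left _ _).trans (Nat.le_sub_one_of_lt (digit_lt (by omega) m i))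
  change digit b (∑ k ∈ range (m + n + 1), supConv (digit b m) (digit b n) k * b ^ k) t = _
  rw [digit_sum_mul_pow hlt]
  split_ifs with ht
  · rfl
  · refine (Nat.le_zero.1 ((supConv_le_iff _ _).2 fun i j hij => ?_)).symm
    rcases lt_or_ge m i with hi | hi
    · simp [digit_eq_zero_of_lt_index hb hi]
    · simp [digit_eq_zero_of_lt_index hb (show n < j by omega)]

lemma dmul_comm (hb : 1 < b) (m n : ℕ) : dmul b m n = dmul b n m :=
  digit_ext hb fun t => by rw [digit_dmul hb, digit_dmul hb, supConv_comm]

lemma dmul_assoc (hb : 1 < b) (m n k : ℕ) : dmul b (dmul b m n) k = dmul b m (dmul b n k) :=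
  digit_ext hb fun t => by
    rw [digit_dmul hb, digit_dmul hb, funext (digit_dmul hb m n), funext (digit_dmul hb n k),
      supConv_assoc]

lemma dmul_base_sub_one (hb : 1 < b) (m : ℕ) : dmul b m (b - 1) = m :=
  digit_ext hb fun t => by
    rw [digit_dmul hb, digit_base_sub_one hb, supConv_ite_zero,
      min_eq_left (Nat.le_sub_one_of_lt (digit_lt (by omega) m t))]

lemma base_sub_one_dmul (hb : 1 < b) (m : ℕ) : dmul b (b - 1) m = m := by
  rw [dmul_comm hb, dmul_base_sub_one hb]

lemma foldr_dmul_append (hb : 1 < b) (l₁ l₂ : List ℕ) :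
    (l₁ ++ l₂).foldr (dmul b) (b - 1) =
      dmul b (l₁.foldr (dmul b) (b - 1)) (l₂.foldr (dmul b) (b - 1)) := by
  induction l₁ with
  | nil => exact (base_sub_one_dmul hb _).symm
  | cons a l ih => rw [List.cons_append, List.foldr_cons, List.foldr_cons, ih, dmul_assoc hb]

lemma lt_dmul (hb : 1 < b) {m k : ℕ} (hm : m ≠ 0) (hk : b ≤ k) : m < dmul b m k := by
  have hlog : 0 < Nat.log b k := Nat.log_pos hb hk
  have hdigit : digit b (dmul b m k) (Nat.log b m + Nat.log b k) ≠ 0 := by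
    rw [digit_dmul hb]
    have := min_le_supConv (digit b m) (digit b k) (Nat.log b m) (Nat.log b k)
    have := digit_log_ne_zero hb hm
    have := digit_log_ne_zero hb (show k ≠ 0 by omega)
    omega
  calc m < b ^ (Nat.log b m + 1) := Nat.lt_pow_succ_log_self hb m
    _ ≤ b ^ (Nat.log b m + Nat.log b k) := Nat.pow_le_pow_right (by omega) (by omega)
    _ ≤ dmul b m k := pow_le_of_digit_ne_zero hdigit

lemma exists_digit_eq_of_digit_dmul_eq (hb : 1 < b) {m k t : ℕ}
    (h : digit b (dmul b m k) t = b - 1) :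
    (∃ i, digit b m i = b - 1) ∧ ∃ j, digit b k j = b - 1 := by
  rw [digit_dmul hb] at h
  obtain ⟨i, j, -, hij⟩ := exists_supConv_eq_min (digit b m) (digit b k) t
  have := digit_lt (b := b) (by omega) m i
  have := digit_lt (b := b) (by omega) k j
  exact ⟨⟨i, by omega⟩, ⟨j, by omega⟩⟩

lemma base_le_of_digit_eq (hb : 1 < b) {k i : ℕ} (hd : digit b k i = b - 1) (hk : k ≠ b - 1) :
    b ≤ k := by
  rcases i with _ | i
  · by_contra hlt
    rw [digit_zero, Nat.mod_eq_of_lt (not_le.1 hlt)] at hd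
    exact hk hd
  · calc b ≤ b ^ (i + 1) := Nat.le_self_pow (Nat.succ_ne_zero i) b
      _ ≤ k := pow_le_of_digit_ne_zero (by omega)

lemma exists_dmul_eq_of_not_dPrime (hb : 1 < b) {n : ℕ} (hn : n ≠ b - 1) (hp : ¬DPrime b n)
    (h : ∃ i, digit b n i = b - 1) :
    ∃ m k, dmul b m k = n ∧ m < n ∧ k < n ∧
      (∃ i, digit b m i = b - 1) ∧ ∃ j, digit b k j = b - 1 := by
  obtain ⟨m, k, rfl, hmk⟩ : ∃ m k, dmul b m k = n ∧
      ¬((m = b - 1 ∧ k = n) ∨ (m = n ∧ k = b - 1)) := by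
    simpa [DPrime, hn] using hp
  obtain ⟨t, ht⟩ := h
  obtain ⟨⟨i, hi⟩, ⟨j, hj⟩⟩ := exists_digit_eq_of_digit_dmul_eq hb ht
  have hmβ : m ≠ b - 1 := by rintro rfl; simp [base_sub_one_dmul hb] at hmk
  have hkβ : k ≠ b - 1 := by rintro rfl; simp [dmul_base_sub_one hb] at hmk
  have hbm := base_le_of_digit_eq hb hi hmβ
  have hbk := base_le_of_digit_eq hb hj hkβ
  refine ⟨m, k, rfl, lt_dmul hb (by omega) hbk, ?_, ⟨i, hi⟩, ⟨j, hj⟩⟩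
  rw [dmul_comm hb]
  exact lt_dmul hb (by omega) hbm

end Dismal

/-- every base-`b` number with a digit equal to `b - 1` is a
(possibly empty) dismal product of dismal primes. -/
theorem dismal_factor_into_primes (b : ℕ) (hb : 2 ≤ b) (n : ℕ)
    (h : ∃ i, digit b n i = b - 1) :
    ∃ l : List ℕ, (∀ p ∈ l, DPrime b p) ∧ l.foldr (dmul b) (b - 1) = n := by
  induction n using Nat.strong_induction_on with
  | _ n ih =>
  by_cases hβ : n = b - 1
  · exact ⟨[], by simp, hβ.symm⟩
  by_cases hp : DPrime b n
  · exact ⟨[n], by simpa using hp, Dismal.dmul_base_sub_one hb n⟩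
  obtain ⟨m, k, rfl, hm, hk, hdm, hdk⟩ := Dismal.exists_dmul_eq_of_not_dPrime hb hβ hp h
  obtain ⟨lm, hlm, rfl⟩ := ih m hm hdm
  obtain ⟨lk, hlk, rfl⟩ := ih k hk hdk
  refine ⟨lm ++ lk, fun p hp => ?_, Dismal.foldr_dmul_append hb lm lk⟩
  rcases List.mem_append.1 hp with hp | hp
  exacts [hlm p hp, hlk p hp]
end

section
/- In base 2 dismal arithmetic, the number of dismal divisors of 2^k − 1 (the number with k binary digits all equal to 1) equals the number of compositions of k in which the first part is greater than or equal to every other part. -/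
/-- `p` dismally divides `n` in base `b`. -/
def DDvd (b p n : ℕ) : Prop := ∃ q, dmul b p q = n

open scoped Classical in
/-- The finite set of dismal divisors of `n` (every dismal divisor of a
nonzero `n` has at most `dlen b n` digits). -/
noncomputable def ddivisors (b n : ℕ) : Finset ℕ :=
  (Finset.range (b ^ dlen b n)).filter fun p => DDvd b p n

/-- The dismal sum of a finite set of numbers: digitwise supremum. -/
def ddigitSum (b : ℕ) (S : Finset ℕ) : ℕ :=
  ∑ i ∈ Finset.range (S.sup id + 1), (S.sup fun p => digit b p i) * b ^ i

/-- The number of dismal divisors of `n` in base `b`. -/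
noncomputable def dnum (b n : ℕ) : ℕ := (ddivisors b n).card

/-!
In base 2 the set bits of `p ⊠ q` form the sumset of the set bits of `p` and `q`. Hence if
`p ⊠ q = 2 ^ k - 1`, the bits of `q` lie in `[0, c)` with `c = k - log₂ p`, and `q` may be replaced
by `2 ^ c - 1`: `p` divides `2 ^ k - 1` iff the windows `[i, i + c)` at the set bits `i` of `p`
cover `[0, k)`. Writing the set bits of an odd `p` as the partial sums of gaps `d₁, …, dᵣ`, this
says `dⱼ ≤ c` for all `j`, so `p ↦ (c, d₁, …, dᵣ)` is a bijection onto the compositions of `k`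
whose first part is maximal.
-/

open Finset

theorem Nat.testBit_log_two {n : ℕ} (hn : n ≠ 0) : n.testBit (Nat.log 2 n) = true :=
  Nat.log2_eq_log_two ▸ Nat.testBit_log2 hn

theorem Nat.le_log_two_of_testBit {n i : ℕ} (h : n.testBit i = true) : i ≤ Nat.log 2 n :=
  Nat.le_log_of_pow_le one_lt_two (Nat.ge_two_pow_of_testBit h)

theorem Nat.testBit_sum_toNat_mul_two_pow (b : ℕ → Bool) (N j : ℕ) :
    (∑ i ∈ range N, (b i).toNat * 2 ^ i).testBit j = (decide (j < N) && b j) := by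
  induction N generalizing b j with
  | zero => simp
  | succ N ih =>
    have hsum : ∑ i ∈ range (N + 1), (b i).toNat * 2 ^ i =
        Nat.bit (b 0) (∑ i ∈ range N, (b (i + 1)).toNat * 2 ^ i) := by
      rw [sum_range_succ', Nat.bit_val, mul_sum]
      simp only [pow_succ]
      ring_nf
    rw [hsum]
    cases j with
    | zero => simp
    | succ j => simp [Nat.testBit_bit_succ, ih]

theorem Nat.testBit_two_pow_mul_add_one {d x j : ℕ} (hd : 0 < d) :
    (2 ^ d * x + 1).testBit j = true ↔ j = 0 ∨ d ≤ j ∧ x.testBit (j - d) = true := by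
  rw [Nat.testBit_two_pow_mul_add _ (Nat.one_lt_two_pow hd.ne')]
  split_ifs with hj
  · rw [Nat.testBit_one_eq_true_iff_self_eq_zero]
    omega
  · have hj0 : j ≠ 0 := by omega
    simp [hj0, not_lt.1 hj]

theorem Nat.eq_of_two_pow_mul_eq {d e x y : ℕ} (hx : x.testBit 0 = true) (hy : y.testBit 0 = true)
    (h : 2 ^ d * x = 2 ^ e * y) : d = e ∧ x = y := by
  have key : ∀ {d e x y : ℕ}, x.testBit 0 = true → 2 ^ d * x = 2 ^ e * y → e ≤ d := by
    intro d e x y hx h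
    have hbit : (2 ^ e * y).testBit d = true := by simpa [← h, Nat.testBit_two_pow_mul] using hx
    simp only [Nat.testBit_two_pow_mul, Bool.and_eq_true, decide_eq_true_eq] at hbit
    exact hbit.1
  obtain rfl := le_antisymm (key hy h.symm) (key hx h)
  exact ⟨rfl, Nat.eq_of_mul_eq_mul_left (Nat.two_pow_pos d) h⟩

theorem digit_two (n i : ℕ) : digit 2 n i = (n.testBit i).toNat :=
  (Nat.toNat_testBit n i).symm

theorem sup_min_digit_two (p q k : ℕ) :
    ((range (k + 1)).sup fun i => min (digit 2 p i) (digit 2 q (k - i))) =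
      (decide (∃ i ≤ k, p.testBit i ∧ q.testBit (k - i))).toNat := by
  simp only [digit_two]
  by_cases h : ∃ i ≤ k, p.testBit i ∧ q.testBit (k - i)
  · obtain ⟨i, hik, hp, hq⟩ := h
    rw [decide_eq_true ⟨i, hik, hp, hq⟩]
    refine le_antisymm (Finset.sup_le fun i _ => (min_le_left _ _).trans (Bool.toNat_le _)) ?_
    exact le_sup_of_le (mem_range.2 (Nat.lt_succ_of_le hik)) (by simp [hp, hq])
  · push Not at h
    rw [decide_eq_false (by simpa using h)]
    refine Nat.le_zero.1 (Finset.sup_le fun i hi => ?_)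
    cases hp : p.testBit i
    · simp
    · simp [h i (Nat.le_of_lt_succ (mem_range.1 hi)) hp]

theorem testBit_dmul_two (p q j : ℕ) :
    (dmul 2 p q).testBit j = decide (∃ i ≤ j, p.testBit i ∧ q.testBit (j - i)) := by
  simp only [dmul, sup_min_digit_two, Nat.testBit_sum_toNat_mul_two_pow, Bool.and_eq_right_iff_imp,
    decide_eq_true_eq]
  rintro ⟨i, hij, hp, hq⟩
  have := Nat.ge_two_pow_of_testBit hp
  have := Nat.ge_two_pow_of_testBit hq
  have := i.lt_two_pow_self
  have := (j - i).lt_two_pow_self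
  omega

theorem dmul_two_eq_two_pow_sub_one_iff {p q k : ℕ} :
    dmul 2 p q = 2 ^ k - 1 ↔ ∀ j, (∃ i ≤ j, p.testBit i ∧ q.testBit (j - i)) ↔ j < k := by
  refine ⟨fun h j => ?_, fun h => Nat.eq_of_testBit_eq fun j => ?_⟩
  · simpa [testBit_dmul_two] using congrArg (Nat.testBit · j) h
  · simp [testBit_dmul_two, h j]

theorem dlen_two_pow_sub_one (k : ℕ) : dlen 2 (2 ^ k - 1) = k := by
  have := Nat.one_le_two_pow (n := k)
  refine le_antisymm ((Nat.digits_length_le_iff one_lt_two _).2 (by omega)) ?_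
  cases k with
  | zero => exact Nat.zero_le _
  | succ k =>
    refine (Nat.lt_digits_length_iff one_lt_two _).2 ?_
    rw [pow_succ]
    have := Nat.one_le_two_pow (n := k)
    omega

def BitsCover (p c n : ℕ) : Prop :=
  ∀ j < n, ∃ i ≤ j, p.testBit i ∧ j - i < c

theorem ddvd_two_pow_sub_one_iff {k : ℕ} (hk : 1 ≤ k) (p : ℕ) :
    DDvd 2 p (2 ^ k - 1) ↔ Nat.log 2 p < k ∧ BitsCover p (k - Nat.log 2 p) k := by
  constructor
  · rintro ⟨q, hq⟩
    have H := dmul_two_eq_two_pow_sub_one_iff.1 hq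
    obtain ⟨i, hi, hp0, hq0⟩ := (H 0).2 hk
    obtain rfl : i = 0 := Nat.le_zero.1 hi
    have hp : p ≠ 0 := by rintro rfl; simp at hp0
    have hq : q ≠ 0 := by rintro rfl; simp at hq0
    have hlog : Nat.log 2 p + Nat.log 2 q < k := (H _).1
      ⟨_, Nat.le_add_right _ _, Nat.testBit_log_two hp, by simpa using Nat.testBit_log_two hq⟩
    refine ⟨by omega, fun j hj => ?_⟩
    obtain ⟨i, hij, hpi, hqi⟩ := (H j).2 hj
    exact ⟨i, hij, hpi, by have := Nat.le_log_two_of_testBit hqi; omega⟩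
  · rintro ⟨hlog, hcover⟩
    refine ⟨2 ^ (k - Nat.log 2 p) - 1, dmul_two_eq_two_pow_sub_one_iff.2 fun j => ⟨?_, ?_⟩⟩
    · rintro ⟨i, -, hpi, hqi⟩
      have := Nat.le_log_two_of_testBit hpi
      simp only [Nat.testBit_two_pow_sub_one, decide_eq_true_eq] at hqi
      omega
    · intro hj
      obtain ⟨i, hij, hpi, hi⟩ := hcover j hj
      exact ⟨i, hij, hpi, by simpa using hi⟩

theorem mem_ddivisors_two_pow_sub_one_iff {k : ℕ} (hk : 1 ≤ k) (p : ℕ) :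
    p ∈ ddivisors 2 (2 ^ k - 1) ↔ Nat.log 2 p < k ∧ BitsCover p (k - Nat.log 2 p) k := by
  classical
  rw [ddivisors, mem_filter, mem_range, dlen_two_pow_sub_one, ddvd_two_pow_sub_one_iff hk]
  exact and_iff_right_of_imp fun h => Nat.lt_pow_of_log_lt one_lt_two h.1

theorem BitsCover.testBit_zero {p c n : ℕ} (h : BitsCover p c n) (hn : 0 < n) :
    p.testBit 0 = true := by
  obtain ⟨i, hi, hp, -⟩ := h 0 hn
  rwa [Nat.le_zero.1 hi] at hp

theorem bitsCover_two_pow_mul_add_one_iff {d x c n : ℕ} (hd : 0 < d) (hx : x.testBit 0 = true) :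
    BitsCover (2 ^ d * x + 1) c (d + n) ↔ d ≤ c ∧ BitsCover x c n := by
  constructor
  · intro h
    refine ⟨?_, fun j hj => ?_⟩
    · by_contra! hcd
      obtain ⟨i, hi, hb, hlt⟩ := h c (by omega)
      rcases (Nat.testBit_two_pow_mul_add_one hd).1 hb with rfl | ⟨hdi, -⟩ <;> omega
    · obtain ⟨i, hi, hb, hlt⟩ := h (j + d) (by omega)
      rcases (Nat.testBit_two_pow_mul_add_one hd).1 hb with rfl | ⟨hdi, hxi⟩
      · exact ⟨0, Nat.zero_le _, hx, by omega⟩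
      · exact ⟨i - d, by omega, hxi, by omega⟩
  · rintro ⟨hdc, hx⟩ j hj
    by_cases hjc : j < c
    · exact ⟨0, Nat.zero_le _, (Nat.testBit_two_pow_mul_add_one hd).2 (Or.inl rfl), by omega⟩
    · obtain ⟨i, hi, hb, hlt⟩ := hx (j - d) (by omega)
      have hbit : (2 ^ d * x + 1).testBit (i + d) = true :=
        (Nat.testBit_two_pow_mul_add_one hd).2 (Or.inr ⟨by omega, by simpa using hb⟩)
      exact ⟨i + d, by omega, hbit, by omega⟩

/-- For positive gaps `ds = [d₁, d₂, …]`, the odd number whose set bits are `0, d₁, d₁ + d₂, …`. -/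
def ofGaps : List ℕ → ℕ
  | [] => 1
  | d :: ds => 2 ^ d * ofGaps ds + 1

section ofGaps

variable {ds es : List ℕ}

theorem testBit_zero_ofGaps (hds : ∀ d ∈ ds, 0 < d) : (ofGaps ds).testBit 0 = true := by
  cases ds with
  | nil => rfl
  | cons d ds => exact (Nat.testBit_two_pow_mul_add_one (hds d List.mem_cons_self)).2 (Or.inl rfl)

theorem ofGaps_mem_Ico (hds : ∀ d ∈ ds, 0 < d) :
    ofGaps ds ∈ Set.Ico (2 ^ ds.sum) (2 ^ (ds.sum + 1)) := by
  induction ds with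
  | nil => simp [ofGaps]
  | cons d ds ih =>
    obtain ⟨hlo, hhi⟩ := ih fun e he => hds e (List.mem_cons_of_mem d he)
    have hd := Nat.one_lt_two_pow (hds d List.mem_cons_self).ne'
    simp only [ofGaps, List.sum_cons, Set.mem_Ico, pow_add, pow_succ] at hlo hhi ⊢
    constructor <;> nlinarith

theorem log_ofGaps (hds : ∀ d ∈ ds, 0 < d) : Nat.log 2 (ofGaps ds) = ds.sum :=
  Nat.log_eq_of_pow_le_of_lt_pow (ofGaps_mem_Ico hds).1 (ofGaps_mem_Ico hds).2

theorem bitsCover_ofGaps_iff {c : ℕ} (hds : ∀ d ∈ ds, 0 < d) :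
    BitsCover (ofGaps ds) c (ds.sum + c) ↔ ∀ d ∈ ds, d ≤ c := by
  induction ds with
  | nil => simpa [ofGaps, BitsCover] using fun j hj => ⟨0, Nat.zero_le j, rfl, hj⟩
  | cons d ds ih =>
    have hds' : ∀ e ∈ ds, 0 < e := fun e he => hds e (List.mem_cons_of_mem d he)
    rw [List.sum_cons, add_assoc, ofGaps,
      bitsCover_two_pow_mul_add_one_iff (hds d List.mem_cons_self) (testBit_zero_ofGaps hds'),
      ih hds', List.forall_mem_cons]

theorem ofGaps_injective (hds : ∀ d ∈ ds, 0 < d) (hes : ∀ e ∈ es, 0 < e)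
    (h : ofGaps ds = ofGaps es) : ds = es := by
  have hsum : ds.sum = es.sum := by rw [← log_ofGaps hds, h, log_ofGaps hes]
  induction ds generalizing es with
  | nil =>
    cases es with
    | nil => rfl
    | cons e es =>
      have := hes e List.mem_cons_self
      simp only [List.sum_nil, List.sum_cons] at hsum
      omega
  | cons d ds ih =>
    cases es with
    | nil =>
      have := hds d List.mem_cons_self
      simp only [List.sum_nil, List.sum_cons] at hsum
      omega
    | cons e es =>
      have hds' : ∀ x ∈ ds, 0 < x := fun x hx => hds x (List.mem_cons_of_mem d hx)
      have hes' : ∀ x ∈ es, 0 < x := fun x hx => hes x (List.mem_cons_of_mem e hx)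
      obtain ⟨rfl, h'⟩ := Nat.eq_of_two_pow_mul_eq (testBit_zero_ofGaps hds')
        (testBit_zero_ofGaps hes') (Nat.add_right_cancel h)
      rw [ih hds' hes' h' (by simpa using hsum)]

theorem exists_ofGaps {p : ℕ} (hp : p.testBit 0 = true) :
    ∃ ds : List ℕ, (∀ d ∈ ds, 0 < d) ∧ ofGaps ds = p := by
  induction p using Nat.strong_induction_on with
  | _ p ih =>
  have hodd : p % 2 = 1 := by simpa [Nat.testBit_zero] using hp
  obtain rfl | hp1 := eq_or_ne p 1
  · exact ⟨[], by simp, rfl⟩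
  obtain ⟨d, x, hx, hpx⟩ := Nat.exists_eq_two_pow_mul_odd (n := p - 1) (by omega)
  rw [Nat.odd_iff] at hx
  have hd : 0 < d := Nat.pos_of_ne_zero <| by rintro rfl; rw [pow_zero, one_mul] at hpx; omega
  have hxp : x < p := by have := Nat.le_mul_of_pos_left x (Nat.two_pow_pos d); omega
  obtain ⟨ds, hds, rfl⟩ := ih x hxp (by simpa [Nat.testBit_zero] using hx)
  exact ⟨d :: ds, List.forall_mem_cons.2 ⟨hd, hds⟩, by rw [ofGaps]; omega⟩

end ofGaps

theorem ofGaps_mem_ddivisors_iff {k : ℕ} (hk : 1 ≤ k) {ds : List ℕ} (hds : ∀ d ∈ ds, 0 < d) :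
    ofGaps ds ∈ ddivisors 2 (2 ^ k - 1) ↔ ds.sum < k ∧ ∀ d ∈ ds, d ≤ k - ds.sum := by
  rw [mem_ddivisors_two_pow_sub_one_iff hk, log_ofGaps hds]
  refine and_congr_right fun h => ?_
  rw [← bitsCover_ofGaps_iff hds, Nat.add_sub_cancel' h.le]

def IsHeadMaxComposition (k : ℕ) (l : List ℕ) : Prop :=
  l.sum = k ∧ (∀ x ∈ l, 0 < x) ∧ ∀ x ∈ l, x ≤ l.headI

theorem isHeadMaxComposition_cons_iff {k c : ℕ} {ds : List ℕ} :
    IsHeadMaxComposition k (c :: ds) ↔ 0 < c ∧ c + ds.sum = k ∧ ∀ d ∈ ds, 0 < d ∧ d ≤ c := by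
  simp only [IsHeadMaxComposition, List.sum_cons, List.forall_mem_cons, List.headI_cons, le_refl,
    true_and, forall_and]
  tauto

theorem IsHeadMaxComposition.exists_eq_cons {k : ℕ} {l : List ℕ} (hl : IsHeadMaxComposition k l)
    (hk : 1 ≤ k) : ∃ c ds, l = c :: ds := by
  cases l with
  | nil => exact absurd hl.1 (by rw [List.sum_nil]; omega)
  | cons c ds => exact ⟨c, ds, rfl⟩

theorem ofGaps_tail_mem_ddivisors {k : ℕ} (hk : 1 ≤ k) {l : List ℕ}
    (hl : IsHeadMaxComposition k l) : ofGaps l.tail ∈ ddivisors 2 (2 ^ k - 1) := by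
  obtain ⟨c, ds, rfl⟩ := hl.exists_eq_cons hk
  obtain ⟨hc, hsum, hds⟩ := isHeadMaxComposition_cons_iff.1 hl
  rw [List.tail_cons, ofGaps_mem_ddivisors_iff hk fun d hd => (hds d hd).1]
  exact ⟨by omega, fun d hd => by have := (hds d hd).2; omega⟩

theorem IsHeadMaxComposition.eq_of_ofGaps_tail_eq {k : ℕ} (hk : 1 ≤ k) {l₁ l₂ : List ℕ}
    (hl₁ : IsHeadMaxComposition k l₁) (hl₂ : IsHeadMaxComposition k l₂)
    (h : ofGaps l₁.tail = ofGaps l₂.tail) : l₁ = l₂ := by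
  obtain ⟨c₁, ds₁, rfl⟩ := hl₁.exists_eq_cons hk
  obtain ⟨c₂, ds₂, rfl⟩ := hl₂.exists_eq_cons hk
  obtain ⟨-, hsum₁, hds₁⟩ := isHeadMaxComposition_cons_iff.1 hl₁
  obtain ⟨-, hsum₂, hds₂⟩ := isHeadMaxComposition_cons_iff.1 hl₂
  obtain rfl := ofGaps_injective (fun d hd => (hds₁ d hd).1) (fun d hd => (hds₂ d hd).1) h
  rw [show c₁ = c₂ by omega]

theorem exists_isHeadMaxComposition_ofGaps_tail {k p : ℕ} (hk : 1 ≤ k)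
    (hp : p ∈ ddivisors 2 (2 ^ k - 1)) : ∃ l, IsHeadMaxComposition k l ∧ ofGaps l.tail = p := by
  obtain ⟨-, hcover⟩ := (mem_ddivisors_two_pow_sub_one_iff hk p).1 hp
  obtain ⟨ds, hds, rfl⟩ := exists_ofGaps (hcover.testBit_zero hk)
  obtain ⟨hsum, hle⟩ := (ofGaps_mem_ddivisors_iff hk hds).1 hp
  refine ⟨(k - ds.sum) :: ds, isHeadMaxComposition_cons_iff.2 ⟨by omega, by omega, ?_⟩, rfl⟩
  exact fun d hd => ⟨hds d hd, hle d hd⟩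

/-- the number of base-2 dismal divisors of `2^k - 1` equals the
number of compositions of `k` whose first part is at least every other part. -/
theorem dismal_divisors_repunit_base2 (k : ℕ) (hk : 1 ≤ k) :
    dnum 2 (2 ^ k - 1) =
      Nat.card {l : List ℕ // l.sum = k ∧ (∀ x ∈ l, 0 < x) ∧ ∀ x ∈ l, x ≤ l.headI} := by
  rw [dnum, ← Nat.card_eq_finsetCard]
  let f : {l // IsHeadMaxComposition k l} → ddivisors 2 (2 ^ k - 1) :=
    fun l => ⟨ofGaps l.1.tail, ofGaps_tail_mem_ddivisors hk l.2⟩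
  refine (Nat.card_congr (Equiv.ofBijective f ⟨?_, ?_⟩)).symm
  · rintro ⟨l₁, hl₁⟩ ⟨l₂, hl₂⟩ h
    exact Subtype.ext (hl₁.eq_of_ofGaps_tail_eq hk hl₂ (congrArg Subtype.val h))
  · rintro ⟨p, hp⟩
    obtain ⟨l, hl, rfl⟩ := exists_isHeadMaxComposition_ofGaps_tail hk hp
    exact ⟨⟨l, hl⟩, rfl⟩
end

section
/- If n has binary weight w (w ones in its base-2 expansion), then the number of ways to write n as a dismal sum (base 2) of finitely many distinct positive integers equals (1/2)·Σ_{i=0}^{w} (−1)^{w−i} C(w,i) 2^{2^i}, i.e., the number of covers of a labeled w-set by distinct nonempty subsets. -/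
/-!
A set `S` of positive integers has bitwise OR `n` exactly when the sets of bit positions of its
members form a cover of the set `B` of bit positions of `n` (the part `0` would contribute the
empty set). So `p₂ n` counts covers of a `w`-set by distinct nonempty subsets. Sorting all
families of nonempty subsets of `T` by their union gives
`2 ^ (2 ^ #T - 1) = ∑_{U ⊆ T} #covers U`, and Möbius inversion on the Boolean lattice yields
`#covers B = ∑_{T ⊆ B} (-1) ^ (#B - #T) 2 ^ (2 ^ #T - 1)`; the factor `2` of the statement
absorbs the `- 1` in the exponent.
-/

/-- `p₂ n`: the number of sets of distinct positive integers whose base-2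
dismal sum (bitwise OR) equals `n`. -/
noncomputable def p2 (n : ℕ) : ℕ :=
  Nat.card {S : Finset ℕ // S.Nonempty ∧ (∀ m ∈ S, 0 < m) ∧
    ∀ i, n.testBit i = true ↔ ∃ m ∈ S, m.testBit i = true}

open Finset

theorem Nat.sum_digits_two_eq_length_bitIndices (n : ℕ) :
    (Nat.digits 2 n).sum = n.bitIndices.length := by
  induction n using Nat.evenOddRec with
  | h0 => simp
  | h_even n ih =>
    rcases n.eq_zero_or_pos with rfl | hn
    · simp
    · rw [Nat.digits_def' (by norm_num) (by omega)]
      simp [ih]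
  | h_odd n ih =>
    rw [Nat.digits_def' (by norm_num) (by omega), Nat.mul_add_mod, Nat.mul_add_div two_pos,
      Nat.bitIndices_two_mul_add_one]
    simp [ih, add_comm]

theorem Nat.sum_digits_two_eq_card_equivBitIndices (n : ℕ) :
    (Nat.digits 2 n).sum = #(equivBitIndices n) := by
  rw [equivBitIndices_apply, List.toFinset_card_of_nodup Nat.bitIndices_nodup,
    sum_digits_two_eq_length_bitIndices]

namespace Finset

variable {α : Type*} [DecidableEq α]

theorem sum_Icc_neg_one_pow_card_sub {R : Type*} [CommRing R] {U A : Finset α} (hUA : U ⊆ A) :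
    ∑ T ∈ Icc U A, (-1 : R) ^ (#A - #T) = if U = A then 1 else 0 := by
  have hdisj : ∀ {V}, V ∈ (A \ U).powerset → Disjoint U V := fun hV =>
    disjoint_of_subset_right (mem_powerset.1 hV) disjoint_sdiff
  have hinj : Set.InjOn (U ∪ ·) ((A \ U).powerset : Set (Finset α)) := fun V hV W hW h => by
    rw [← union_sdiff_cancel_left (hdisj hV), ← union_sdiff_cancel_left (hdisj hW)]
    exact congrArg (· \ U) h
  have hcard : ∀ V ∈ (A \ U).powerset, #A - #(U ∪ V) = #(A \ U) - #V := fun V hV => by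
    rw [card_union_of_disjoint (hdisj hV), card_sdiff_of_subset hUA]
    omega
  have binomial := sum_pow_mul_eq_add_pow (1 : R) (-1) (A \ U)
  simp only [one_pow, one_mul, add_neg_cancel, zero_pow_eq, card_eq_zero,
    sdiff_eq_empty_iff_subset] at binomial
  rw [Icc_eq_image_powerset hUA, sum_image hinj, sum_congr rfl fun V hV => by rw [hcard V hV],
    binomial]
  exact if_congr ⟨hUA.antisymm, fun h => h ▸ subset_rfl⟩ rfl rfl

theorem sum_powerset_neg_one_pow_mul_sum_powerset {R : Type*} [CommRing R]
    (g : Finset α → R) (A : Finset α) :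
    ∑ T ∈ A.powerset, (-1 : R) ^ (#A - #T) * ∑ U ∈ T.powerset, g U = g A := by
  simp_rw [mul_sum]
  rw [sum_comm' (t' := A.powerset) (s' := fun U => Icc U A) fun T U => by
    simp only [mem_powerset, mem_Icc]
    constructor
    · exact fun ⟨hTA, hUT⟩ => ⟨⟨hUT, hTA⟩, hUT.trans hTA⟩
    · exact fun ⟨⟨hUT, hTA⟩, _⟩ => ⟨hTA, hUT⟩]
  simp_rw [← sum_mul]
  rw [sum_congr rfl fun U hU => by rw [sum_Icc_neg_one_pow_card_sub (mem_powerset.1 hU)]]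
  simp [ite_mul]

def covers (A : Finset α) : Finset (Finset (Finset α)) :=
  {C ∈ (A.powerset.erase ∅).powerset | C.sup id = A}

theorem mem_covers {A : Finset α} {C : Finset (Finset α)} :
    C ∈ covers A ↔ ∅ ∉ C ∧ C.sup id = A := by
  rw [covers, mem_filter, mem_powerset, subset_erase, and_assoc]
  exact and_iff_right_of_imp fun ⟨_, hC⟩ s hs => mem_powerset.2 (hC ▸ le_sup (f := id) hs)

theorem sum_card_covers_powerset (T : Finset α) :
    ∑ U ∈ T.powerset, #(covers U) = 2 ^ (2 ^ #T - 1) := by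
  have hmaps : ((T.powerset.erase ∅).powerset : Set (Finset (Finset α))).MapsTo
      (·.sup id) T.powerset := fun C hC =>
    mem_powerset.2 <| Finset.sup_le fun s hs =>
      mem_powerset.1 <| mem_of_mem_erase <| mem_powerset.1 hC hs
  rw [← card_powerset T, ← card_erase_of_mem (empty_mem_powerset T), ← card_powerset,
    card_eq_sum_card_fiberwise hmaps]
  refine sum_congr rfl fun U hU => congrArg card <| ext fun C => ?_
  rw [mem_covers, mem_filter, mem_powerset, subset_erase, and_assoc]
  exact (and_iff_right_of_imp fun ⟨_, hC⟩ s hs =>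
    mem_powerset.2 <| (hC ▸ le_sup (f := id) hs).trans (mem_powerset.1 hU)).symm

theorem two_mul_card_covers (A : Finset α) :
    (2 * #(covers A) : ℤ) =
      ∑ i ∈ range (#A + 1), (-1 : ℤ) ^ (#A - i) * (#A).choose i * 2 ^ (2 ^ i) := by
  have inversion := sum_powerset_neg_one_pow_mul_sum_powerset (fun U => (#(covers U) : ℤ)) A
  simp only [← Nat.cast_sum, sum_card_covers_powerset] at inversion
  rw [← inversion, mul_sum, sum_powerset_apply_card
    (f := fun k => 2 * ((-1 : ℤ) ^ (#A - k) * ((2 ^ (2 ^ k - 1) : ℕ) : ℤ)))]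
  refine sum_congr rfl fun i _ => ?_
  have hpow : (2 : ℤ) ^ 2 ^ i = 2 * 2 ^ (2 ^ i - 1) := by
    rw [← pow_succ', Nat.sub_add_cancel Nat.one_le_two_pow]
  rw [nsmul_eq_mul, hpow]
  push_cast
  ring

theorem sup_equivBitIndices_eq_iff (S : Finset ℕ) (n : ℕ) :
    S.sup equivBitIndices = equivBitIndices n ↔ ∀ i, n.testBit i ↔ ∃ m ∈ S, m.testBit i := by
  simp [Finset.ext_iff, mem_sup, iff_comm]

end Finset

theorem p2_eq_card_covers {n : ℕ} (hn : n ≠ 0) : p2 n = #(covers (equivBitIndices n)) := by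
  rw [p2, ← Nat.card_eq_finsetCard]
  refine Nat.card_congr (equivBitIndices.finsetCongr.subtypeEquiv fun S => ?_)
  have hzero : equivBitIndices.symm ∅ = 0 := by simp
  rw [mem_covers, Equiv.finsetCongr_apply, mem_map_equiv, hzero, sup_map, Function.id_comp,
    Equiv.coe_toEmbedding, sup_equivBitIndices_eq_iff]
  constructor
  · rintro ⟨-, hpos, hbits⟩
    exact ⟨fun h0 => (hpos 0 h0).false, hbits⟩
  · rintro ⟨h0, hbits⟩
    refine ⟨?_, fun m hm => Nat.pos_of_ne_zero fun h => h0 (h ▸ hm), hbits⟩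
    obtain ⟨i, hi⟩ := Nat.exists_testBit_of_ne_zero hn
    obtain ⟨m, hm, -⟩ := (hbits i).1 hi
    exact ⟨m, hm⟩

/-- if `n` has binary weight `w`, the number of dismal partitions
of `n` into distinct parts is `(1/2)·Σ_{i=0}^{w} (−1)^{w−i} C(w,i) 2^{2^i}`. -/
theorem dismal_partitions_base2 (n : ℕ) (hn : 0 < n) :
    (2 * p2 n : ℤ) =
      ∑ i ∈ Finset.range ((Nat.digits 2 n).sum + 1),
        (-1 : ℤ) ^ ((Nat.digits 2 n).sum - i) *
          (Nat.choose (Nat.digits 2 n).sum i) * 2 ^ (2 ^ i) := by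
  rw [p2_eq_card_covers hn.ne', Nat.sum_digits_two_eq_card_equivBitIndices,
    Finset.two_mul_card_covers]
end
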